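/- arXiv:math/0410192 — 8 statements merged into one kernel-verified Lean document; each statement's English description precedes it below -/
import Mathlib

section
/- For every f ∈ C_c(U), the function L(f) : X → ℂ is continuous on X. -/
/-- `σ : U → X` is a local homeomorphism. -/
def IsLocalHomeo {X : Type*} [TopologicalSpace X] (σ : X → X) (U : Set X) : Prop :=
  ∀ x ∈ U, ∃ W : Set X, x ∈ W ∧ W ⊆ U ∧ IsOpen W ∧ IsOpen (σ '' W) ∧
    Set.InjOn σ W ∧ ContinuousOn σ W ∧ ∀ V : Set X, V ⊆ W → IsOpen V → IsOpen (σ '' V)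

/-- `f` is a continuous function on `X` with compact support contained in `U`. -/
def MemCc {X : Type*} [TopologicalSpace X] (U : Set X) (f : X → ℂ) : Prop :=
  Continuous f ∧ IsCompact (tsupport f) ∧ tsupport f ⊆ U

/-- The transfer operator: `L f x = ∑_{y ∈ U, σ y = x} f y` (a finite sum for
`f ∈ C_c(U)`; the empty sum, in particular the case `σ⁻¹(x) = ∅`, gives `0`). -/
noncomputable def Lop {X : Type*} [TopologicalSpace X] (σ : X → X) (U : Set X)
    (f : X → ℂ) : X → ℂ :=
  fun x => ∑ᶠ y ∈ {y : X | y ∈ U ∧ σ y = x}, f y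

open Set Function

/-- Single chart continuity lemma. -/
lemma lemA {X : Type*} [TopologicalSpace X] [T2Space X]
    (U W : Set X) (σ : X → X)
    (hWU : W ⊆ U) (hW : IsOpen W) (himg : IsOpen (σ '' W)) (hinj : Set.InjOn σ W)
    (hcont : ContinuousOn σ W)
    (hmap : ∀ V : Set X, V ⊆ W → IsOpen V → IsOpen (σ '' V))
    (g : X → ℂ) (hg : Continuous g) (hgc : IsCompact (tsupport g))
    (hgW : tsupport g ⊆ W) :
    Continuous (Lop σ U g) := by
  classical
  rcases isEmpty_or_nonempty X with hX | hX
  · rw [continuous_iff_continuousAt]; intro x; exact isEmptyElim x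
  set ψ : X → X := Function.invFunOn σ W with hψdef
  have hψW : ∀ x ∈ σ '' W, ψ x ∈ W := by
    rintro x ⟨a, ha, rfl⟩; exact Function.invFunOn_mem ⟨a, ha, rfl⟩
  have hψeq : ∀ x ∈ σ '' W, σ (ψ x) = x := by
    rintro x ⟨a, ha, rfl⟩; exact Function.invFunOn_eq ⟨a, ha, rfl⟩
  -- value on σ '' W
  have hval1 : ∀ x ∈ σ '' W, Lop σ U g x = g (ψ x) := by
    intro x hx
    have h1 : ψ x ∈ W := hψW x hx
    have h2 : σ (ψ x) = x := hψeq x hx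
    have key : Lop σ U g x = ∑ᶠ y ∈ ({ψ x} : Set X), g y := by
      apply finsum_mem_inter_support_eq
      ext y
      simp only [Set.mem_inter_iff, Set.mem_setOf_eq, Set.mem_singleton_iff,
        Function.mem_support]
      constructor
      · rintro ⟨⟨hyU, hyx⟩, hy0⟩
        have hyW : y ∈ W := hgW (subset_tsupport g hy0)
        exact ⟨hinj hyW h1 (hyx.trans h2.symm), hy0⟩
      · rintro ⟨rfl, hy0⟩
        exact ⟨⟨hWU h1, h2⟩, hy0⟩
    rw [key, finsum_mem_singleton]
  -- value off σ '' tsupport g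
  have hval0 : ∀ x ∉ σ '' tsupport g, Lop σ U g x = 0 := by
    intro x hx
    have key : Lop σ U g x = ∑ᶠ y ∈ (∅ : Set X), g y := by
      apply finsum_mem_inter_support_eq
      ext y
      simp only [Set.mem_inter_iff, Set.mem_setOf_eq, Set.mem_empty_iff_false,
        Function.mem_support, false_and, iff_false, not_and]
      rintro ⟨hyU, rfl⟩ hy0
      exact hx ⟨y, subset_tsupport g hy0, rfl⟩
    rw [key, finsum_mem_empty]
  -- continuity of local inverse
  have hψc : ContinuousOn ψ (σ '' W) := by
    rw [continuousOn_iff]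
    intro x hx V hV hxV
    refine ⟨σ '' (V ∩ W), hmap _ inter_subset_right (hV.inter hW), ?_, ?_⟩
    · exact ⟨ψ x, ⟨hxV, hψW x hx⟩, hψeq x hx⟩
    · rintro z ⟨⟨w, ⟨hwV, hwW⟩, rfl⟩, hz⟩
      have : ψ (σ w) = w := hinj (hψW _ hz) hwW (hψeq _ hz)
      simpa [Set.mem_preimage, this] using hwV
  -- image of support is closed
  have hKc : IsCompact (σ '' tsupport g) := hgc.image_of_continuousOn (hcont.mono hgW)
  have hKcl : IsClosed (σ '' tsupport g) := hKc.isClosed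
  rw [continuous_iff_continuousAt]
  intro x
  by_cases hx : x ∈ σ '' W
  · have hc : ContinuousAt (fun z => g (ψ z)) x :=
      (hg.comp_continuousOn hψc).continuousAt (himg.mem_nhds hx)
    apply hc.congr
    filter_upwards [himg.mem_nhds hx] with z hz
    exact (hval1 z hz).symm
  · have hx' : x ∈ (σ '' tsupport g)ᶜ := by
      intro h
      exact hx (Set.image_mono hgW h)
    have hc : ContinuousAt (fun _ : X => (0 : ℂ)) x := continuousAt_const
    apply hc.congr
    filter_upwards [hKcl.isOpen_compl.mem_nhds hx'] with z hz
    exact (hval0 z hz).symm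

/-- For every `f ∈ C_c(U)`, the function `L f` is continuous on `X`. -/
theorem stmt_1 {X : Type*} [TopologicalSpace X] [CompactSpace X] [T2Space X]
    (U : Set X) (hU : IsOpen U) (σ : X → X) (hσ : IsLocalHomeo σ U)
    (f : X → ℂ) (hf : MemCc U f) :
    Continuous (Lop σ U f) := by
  classical
  obtain ⟨hfc, hfK, hfU⟩ := hf
  choose W hmem hsub hopen himg hinj hcont hmap using hσ
  -- finite cover of the support by charts
  have hcov : tsupport f ⊆ ⋃ y : U, W y y.2 := by
    intro z hz
    exact Set.mem_iUnion.2 ⟨⟨z, hfU hz⟩, hmem z (hfU hz)⟩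
  obtain ⟨t, ht⟩ := hfK.elim_finite_subcover (fun y : U => W y y.2)
    (fun y => hopen y y.2) hcov
  have hcov' : tsupport f ⊆ ⋃ i : t, W i.1.1 i.1.2 := by
    intro z hz
    rcases Set.mem_iUnion₂.1 (ht hz) with ⟨i, hi, hzi⟩
    exact Set.mem_iUnion.2 ⟨⟨i, hi⟩, hzi⟩
  -- partition of unity
  obtain ⟨ρ, hρ⟩ := PartitionOfUnity.exists_isSubordinate (isClosed_tsupport f)
    (fun i : t => W i.1.1 i.1.2) (fun i => hopen i.1.1 i.1.2) hcov'
  set F : t → X → ℂ := fun i z => (ρ i z) • f z with hF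
  have hFsupp : ∀ i : t, Function.support (F i) ⊆ Function.support f := by
    intro i z hz
    intro h0
    apply hz
    simp [hF, h0]
  have hFts : ∀ i : t, tsupport (F i) ⊆ tsupport f :=
    fun i => closure_mono (hFsupp i)
  -- fibers meet the support in a finite set
  have hEfin : ∀ x : X, ({y | y ∈ U ∧ σ y = x} ∩ tsupport f).Finite := by
    intro x
    have hsub' : ({y | y ∈ U ∧ σ y = x} ∩ tsupport f) ⊆
        ⋃ i ∈ t, ({y | y ∈ U ∧ σ y = x} ∩ W i.1 i.2) := by
      intro y hy
      rcases Set.mem_iUnion₂.1 (ht hy.2) with ⟨i, hi, hyi⟩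
      exact Set.mem_iUnion₂.2 ⟨i, hi, hy.1, hyi⟩
    refine Set.Finite.subset (Set.Finite.biUnion t.finite_toSet fun i _ => ?_) hsub'
    apply Set.Subsingleton.finite
    rintro a ⟨⟨_, ha⟩, haW⟩ b ⟨⟨_, hb⟩, hbW⟩
    exact hinj i.1 i.2 haW hbW (ha.trans hb.symm)
  -- decomposition of Lop
  have key : ∀ x, Lop σ U f x = ∑ i : t, Lop σ U (F i) x := by
    intro x
    have hE := hEfin x
    have conv : ∀ g : X → ℂ, Function.support g ⊆ tsupport f →
        (∑ᶠ y ∈ {y | y ∈ U ∧ σ y = x}, g y) = ∑ y ∈ hE.toFinset, g y := by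
      intro g hgs
      apply finsum_mem_eq_sum_of_inter_support_eq
      ext y
      simp only [Set.mem_inter_iff, Set.mem_setOf_eq, Finset.coe_sort_coe,
        Set.Finite.coe_toFinset, Function.mem_support]
      constructor
      · rintro ⟨hy, h0⟩
        exact ⟨⟨hy, hgs h0⟩, h0⟩
      · rintro ⟨⟨hy, _⟩, h0⟩
        · exact ⟨hy, h0⟩
    have h1 : Lop σ U f x = ∑ y ∈ hE.toFinset, f y := conv f (subset_tsupport f)
    have h2 : ∀ i : t, Lop σ U (F i) x = ∑ y ∈ hE.toFinset, F i y := fun i =>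
      conv (F i) (fun z hz => subset_tsupport f (hFsupp i hz))
    rw [h1]
    calc ∑ y ∈ hE.toFinset, f y = ∑ y ∈ hE.toFinset, ∑ i : t, F i y := by
          apply Finset.sum_congr rfl
          intro y hy
          have hyE : y ∈ {y | y ∈ U ∧ σ y = x} ∩ tsupport f := hE.mem_toFinset.1 hy
          have hone : ∑ i : t, ρ i y = 1 := by
            have := ρ.sum_eq_one hyE.2
            rwa [finsum_eq_sum_of_fintype] at this
          simp only [hF]
          rw [← Finset.sum_smul, hone, one_smul]
      _ = ∑ i : t, ∑ y ∈ hE.toFinset, F i y := Finset.sum_comm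
      _ = ∑ i : t, Lop σ U (F i) x := by
          apply Finset.sum_congr rfl
          intro i _
          exact (h2 i).symm
  have hfun : Lop σ U f = fun x => ∑ i : t, Lop σ U (F i) x := funext key
  rw [hfun]
  apply continuous_finset_sum
  intro i _
  apply lemA U (W i.1.1 i.1.2) σ (hsub i.1.1 i.1.2) (hopen i.1.1 i.1.2)
    (himg i.1.1 i.1.2) (hinj i.1.1 i.1.2) (hcont i.1.1 i.1.2) (hmap i.1.1 i.1.2)
  · exact ((ρ i).continuous).smul hfc
  · exact IsCompact.of_isClosed_subset hfK (isClosed_tsupport _) (hFts i)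
  · refine subset_trans ?_ (hρ i)
    apply closure_mono
    intro z hz
    intro h0
    apply hz
    simp [hF, h0]
end

section
/- If f ∈ C_c(U) and x ∈ U satisfies f(x) ≠ 0, then L(conj(f)·f)(σ(x)) > 0. Consequently, if L(conj(f)·f) = 0 then f = 0. -/
open scoped ComplexOrder

/-- If `f ∈ C_c(U)` and `x ∈ U` with `f x ≠ 0` then `L(conj f · f)(σ x) > 0`;
consequently if `L(conj f · f) = 0` then `f = 0`. -/
theorem stmt_2 {X : Type*} [TopologicalSpace X] [CompactSpace X] [T2Space X]
    (U : Set X) (hU : IsOpen U) (σ : X → X) (hσ : IsLocalHomeo σ U)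
    (f : X → ℂ) (hf : MemCc U f) :
    (∀ x ∈ U, f x ≠ 0 →
      0 < Lop σ U (fun y => (starRingEnd ℂ) (f y) * f y) (σ x)) ∧
    (Lop σ U (fun y => (starRingEnd ℂ) (f y) * f y) = 0 → f = 0) := by
  obtain ⟨hfc, hK, hKU⟩ := hf
  set g : X → ℂ := fun y => (starRingEnd ℂ) (f y) * f y with hg
  have hsupp : Function.support g = Function.support f := by
    ext y
    simp [hg, Function.mem_support, mul_eq_zero, map_eq_zero]
  -- finiteness of fibers intersected with the support
  have fiber_fin : ∀ x : X, ({y | y ∈ U ∧ σ y = x} ∩ tsupport f).Finite := by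
    intro x
    choose W hmem hWU hWopen _ hinj _ _ using hσ
    obtain ⟨t, ht⟩ := hK.elim_finite_subcover
      (fun y : tsupport f => W y (hKU y.2))
      (fun y => hWopen _ _)
      (fun z hz => Set.mem_iUnion.2 ⟨⟨z, hz⟩, hmem _ _⟩)
    have hsub : {y | y ∈ U ∧ σ y = x} ∩ tsupport f ⊆
        ⋃ y ∈ t, ({y' | y' ∈ U ∧ σ y' = x} ∩ W y (hKU y.2)) := by
      intro z hz
      obtain ⟨y, hyt, hzW⟩ := Set.mem_iUnion₂.1 (ht hz.2)
      exact Set.mem_iUnion₂.2 ⟨y, hyt, hz.1, hzW⟩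
    refine Set.Finite.subset (Set.Finite.biUnion t.finite_toSet fun y _ => ?_) hsub
    refine Set.Subsingleton.finite fun a ha b hb => ?_
    exact hinj y (hKU y.2) ha.2 hb.2 (ha.1.2.trans hb.1.2.symm)
  have key : ∀ x ∈ U, f x ≠ 0 → 0 < Lop σ U g (σ x) := by
    intro x hxU hfx
    have hfin : ({y | y ∈ U ∧ σ y = σ x} ∩ Function.support g).Finite := by
      refine (fiber_fin (σ x)).subset fun y hy => ⟨hy.1, subset_tsupport f ?_⟩
      rw [← hsupp]; exact hy.2
    rw [Lop, finsum_mem_eq_sum g hfin]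
    refine Finset.sum_pos' (fun y _ => ?_) ⟨x, ?_, ?_⟩
    · exact star_mul_self_nonneg (f y)
    · rw [Set.Finite.mem_toFinset]
      exact ⟨⟨hxU, rfl⟩, by rw [hsupp]; exact hfx⟩
    · have : (0 : ℝ) < Complex.normSq (f x) := Complex.normSq_pos.2 hfx
      have h2 : g x = ((Complex.normSq (f x) : ℝ) : ℂ) := by
        simp only [hg]; rw [mul_comm, Complex.mul_conj]
      rw [h2]
      exact_mod_cast Complex.zero_lt_real.2 this
  refine ⟨key, fun hL => ?_⟩
  by_contra hf0
  obtain ⟨x, hx⟩ := Function.ne_iff.1 hf0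
  have hx' : f x ≠ 0 := hx
  have hxU : x ∈ U := hKU (subset_tsupport f hx')
  have := key x hxU hx'
  rw [hL] at this
  simp at this
end

section
/- If f ∈ C_c(U) and σ restricted to supp(f) is injective, then sup_{x ∈ X} |L(conj(f)·f)(x)| = (sup_{x ∈ X} |f(x)|)². -/
/-!
If `σ` is injective on the support of `g`, each fibre of `σ` meets that support in at most one
point, so `L g` takes the value `g y` at `σ y` for `y ∈ supp g` and vanishes off `σ (supp g)`.
Hence `‖L g‖` and `‖g‖` have the same supremum; for `g = conj f · f` this is `sup ‖f‖²`.
-/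

open Function Set

theorem Real.iSup_pow_of_nonneg {ι : Sort*} {h : ι → ℝ} (hh : ∀ i, 0 ≤ h i) {n : ℕ}
    (hn : n ≠ 0) : (⨆ i, h i) ^ n = ⨆ i, h i ^ n := by
  lift h to ι → NNReal using hh
  simp only [← NNReal.coe_iSup, ← NNReal.coe_pow, NNReal.iSup_pow_of_ne_zero hn]

namespace Lop

variable {X : Type*} {σ : X → X} {U : Set X} {g : X → ℂ}

theorem fibre_inter_support_subsingleton (hinj : InjOn σ (support g)) (x : X) :
    ({y | y ∈ U ∧ σ y = x} ∩ support g).Subsingleton :=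
  fun _ ha _ hb => hinj ha.2 hb.2 (ha.1.2.trans hb.1.2.symm)

variable [TopologicalSpace X]

theorem apply_eq_finsum_fibre_inter_support (x : X) :
    Lop σ U g x = ∑ᶠ y ∈ {y | y ∈ U ∧ σ y = x} ∩ support g, g y :=
  (finsum_mem_inter_support g _).symm

theorem apply_mem_insert_zero_range (hinj : InjOn σ (support g)) (x : X) :
    Lop σ U g x ∈ insert 0 (range g) := by
  rw [apply_eq_finsum_fibre_inter_support]
  rcases (fibre_inter_support_subsingleton (U := U) hinj x).eq_empty_or_singleton
    with h | ⟨y, h⟩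
  · rw [h, finsum_mem_empty]
    exact mem_insert _ _
  · rw [h, finsum_mem_singleton]
    exact mem_insert_of_mem _ (mem_range_self y)

theorem apply_apply_self (hinj : InjOn σ (support g)) {y : X} (hyU : y ∈ U) (hy : g y ≠ 0) :
    Lop σ U g (σ y) = g y := by
  have hfibre : {z | z ∈ U ∧ σ z = σ y} ∩ support g = {y} :=
    (fibre_inter_support_subsingleton hinj (σ y)).eq_singleton_of_mem ⟨⟨hyU, rfl⟩, hy⟩
  rw [apply_eq_finsum_fibre_inter_support, hfibre, finsum_mem_singleton]

theorem norm_apply_le_iSup_norm (hinj : InjOn σ (support g))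
    (hbdd : BddAbove (range fun x => ‖g x‖)) (x : X) :
    ‖Lop σ U g x‖ ≤ ⨆ y, ‖g y‖ := by
  rcases apply_mem_insert_zero_range (U := U) hinj x with h | ⟨y, h⟩
  · rw [h, norm_zero]
    exact Real.iSup_nonneg fun _ => norm_nonneg _
  · rw [← h]
    exact le_ciSup hbdd y

theorem iSup_norm_eq (hsupp : support g ⊆ U) (hinj : InjOn σ (support g))
    (hbdd : BddAbove (range fun x => ‖g x‖)) :
    ⨆ x, ‖Lop σ U g x‖ = ⨆ x, ‖g x‖ := by
  have hnonneg : 0 ≤ ⨆ x, ‖g x‖ := Real.iSup_nonneg fun _ => norm_nonneg _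
  refine le_antisymm (Real.iSup_le (norm_apply_le_iSup_norm hinj hbdd) hnonneg) ?_
  have hbddL : BddAbove (range fun x => ‖Lop σ U g x‖) :=
    ⟨_, forall_mem_range.2 (norm_apply_le_iSup_norm hinj hbdd)⟩
  have hnonnegL : 0 ≤ ⨆ x, ‖Lop σ U g x‖ := Real.iSup_nonneg fun _ => norm_nonneg _
  refine Real.iSup_le (fun y => ?_) hnonnegL
  by_cases hy : g y = 0
  · rwa [hy, norm_zero]
  · rw [← apply_apply_self hinj (hsupp hy) hy]
    exact le_ciSup hbddL (σ y)

end Lop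

theorem stmt_3_general {X : Type*} [TopologicalSpace X]
    (U : Set X) (σ : X → X)
    (f : X → ℂ) (hf : MemCc U f) (hinj : Set.InjOn σ (tsupport f)) :
    (⨆ x : X, ‖Lop σ U (fun y => (starRingEnd ℂ) (f y) * f y) x‖)
      = (⨆ x : X, ‖f x‖) ^ 2 := by
  obtain ⟨hfc, hfK, hfU⟩ := hf
  set g : X → ℂ := fun y => (starRingEnd ℂ) (f y) * f y
  have hsupp : support g = support f := by
    ext y
    simp [g]
  have hbdd : BddAbove (range fun x => ‖g x‖) :=
    ((continuous_star.comp hfc).mul hfc).norm.bddAbove_range_of_hasCompactSupport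
      (HasCompactSupport.mul_left hfK : HasCompactSupport g).norm
  rw [Lop.iSup_norm_eq (hsupp ▸ (subset_tsupport f).trans hfU)
    (hsupp ▸ hinj.mono (subset_tsupport f)) hbdd,
    Real.iSup_pow_of_nonneg (fun _ => norm_nonneg _) two_ne_zero]
  simp [g, sq]

/-- If `f ∈ C_c(U)` and `σ` is injective on `supp f`, then
`sup_x |L(conj f · f)(x)| = (sup_x |f x|)²`. -/
theorem stmt_3 {X : Type*} [TopologicalSpace X] [CompactSpace X] [T2Space X]
    (U : Set X) (hU : IsOpen U) (σ : X → X) (hσ : IsLocalHomeo σ U)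
    (f : X → ℂ) (hf : MemCc U f) (hinj : Set.InjOn σ (tsupport f)) :
    (⨆ x : X, ‖Lop σ U (fun y => (starRingEnd ℂ) (f y) * f y) x‖)
      = (⨆ x : X, ‖f x‖) ^ 2 :=
  stmt_3_general U σ f hf hinj
end

section
/- Let f, g, h ∈ C_c(U) and suppose σ restricted to supp(f) ∪ supp(g) is injective. Then the function on X equal to f(x)·L(conj(g)·h)(σ(x)) for x ∈ U and equal to 0 for x ∉ U coincides with the pointwise product f·conj(g)·h. -/
/-- If `f, g, h ∈ C_c(U)` and `σ` is injective on `supp f ∪ supp g`, then the function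
equal to `f(x) · L(conj g · h)(σ x)` on `U` and `0` off `U` equals `f · conj g · h`. -/
theorem stmt_4 {X : Type*} [TopologicalSpace X] [CompactSpace X] [T2Space X]
    (U : Set X) (hU : IsOpen U) (σ : X → X) (hσ : IsLocalHomeo σ U)
    (f g h : X → ℂ) (hf : MemCc U f) (hg : MemCc U g) (hh : MemCc U h)
    (hinj : Set.InjOn σ (tsupport f ∪ tsupport g)) :
    U.indicator (fun x => f x * Lop σ U (fun y => (starRingEnd ℂ) (g y) * h y) (σ x))
      = fun x => f x * (starRingEnd ℂ) (g x) * h x := by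
  funext x
  by_cases hxU : x ∈ U
  · rw [Set.indicator_of_mem hxU]
    by_cases hfx : f x = 0
    · simp [hfx]
    · have hxf : x ∈ tsupport f := subset_closure hfx
      have key : Lop σ U (fun y => (starRingEnd ℂ) (g y) * h y) (σ x)
          = (starRingEnd ℂ) (g x) * h x := by
        unfold Lop
        rw [← finsum_mem_singleton (a := x) (f := fun y => (starRingEnd ℂ) (g y) * h y)]
        apply finsum_mem_inter_support_eq'
        intro y hy
        have hgy : g y ≠ 0 := by
          intro h0
          apply hy
          simp [h0]
        have hyg : y ∈ tsupport g := subset_closure hgy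
        constructor
        · rintro ⟨hyU, hyx⟩
          have : y = x := hinj (Or.inr hyg) (Or.inl hxf) hyx
          simp [this]
        · rintro rfl
          exact ⟨hxU, rfl⟩
      rw [key]; ring
  · rw [Set.indicator_of_notMem hxU]
    have : f x = 0 := by
      by_contra h0
      exact hxU (hf.2.2 (subset_closure h0))
    simp [this]
end

section
/- For every continuous g : X → ℂ and every f ∈ C_c(U), the function α(g)·f defined by (α(g)·f)(x) = g(σ(x))·f(x) for x ∈ U and 0 for x ∉ U belongs to C_c(U), and L(α(g)·f) = g·L(f) as functions on X. -/
section

variable {X : Type*} [TopologicalSpace X] {U : Set X}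

theorem IsLocalHomeo.continuousOn {σ : X → X} (hσ : IsLocalHomeo σ U) : ContinuousOn σ U :=
  fun x hx => by
    obtain ⟨W, hxW, -, hW, -, -, hσW, -⟩ := hσ x hx
    exact (hσW.continuousAt (hW.mem_nhds hxW)).continuousWithinAt

theorem tsupport_indicator_mul_subset {M : Type*} [MulZeroClass M] (k f : X → M) :
    tsupport (U.indicator fun x => k x * f x) ⊆ tsupport f :=
  closure_mono <| Set.support_indicator.trans_le <|
    Set.inter_subset_right.trans (Function.support_mul_subset_right _ _)

theorem MemCc.indicator_mul {k f : X → ℂ} (hU : IsOpen U) (hk : ContinuousOn k U)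
    (hf : MemCc U f) : MemCc U (U.indicator fun x => k x * f x) := by
  obtain ⟨hf_cont, hf_compact, hf_sub⟩ := hf
  have hsupp := tsupport_indicator_mul_subset (U := U) k f
  refine ⟨?_, hf_compact.of_isClosed_subset (isClosed_tsupport _) hsupp, hsupp.trans hf_sub⟩
  refine ContinuousOn.continuous_of_tsupport_subset ?_ hU (hsupp.trans hf_sub)
  exact (hk.mul hf_cont.continuousOn).congr fun x hx => Set.indicator_of_mem hx _

theorem Lop_indicator_comp_mul (σ : X → X) (g f : X → ℂ) :
    Lop σ U (U.indicator fun x => g (σ x) * f x) = fun x => g x * Lop σ U f x := by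
  funext x
  rw [Lop, Lop, mul_finsum_mem]
  refine finsum_mem_congr rfl ?_
  rintro y ⟨hyU, rfl⟩
  exact Set.indicator_of_mem hyU _

end

theorem stmt_5_general {X : Type*} [TopologicalSpace X]
    (U : Set X) (hU : IsOpen U) (σ : X → X) (hσ : IsLocalHomeo σ U)
    (g : X → ℂ) (hg : Continuous g) (f : X → ℂ) (hf : MemCc U f) :
    MemCc U (U.indicator fun x => g (σ x) * f x) ∧
    Lop σ U (U.indicator fun x => g (σ x) * f x) = fun x => g x * Lop σ U f x :=
  ⟨hf.indicator_mul hU (hg.comp_continuousOn hσ.continuousOn), Lop_indicator_comp_mul σ g f⟩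

/-- For continuous `g : X → ℂ` and `f ∈ C_c(U)`, the function `α(g)·f`, given by
`x ↦ g (σ x) * f x` on `U` and `0` off `U`, belongs to `C_c(U)`, and
`L (α(g)·f) = g · L f`. -/
theorem stmt_5 {X : Type*} [TopologicalSpace X] [CompactSpace X] [T2Space X]
    (U : Set X) (hU : IsOpen U) (σ : X → X) (hσ : IsLocalHomeo σ U)
    (g : X → ℂ) (hg : Continuous g) (f : X → ℂ) (hf : MemCc U f) :
    MemCc U (U.indicator fun x => g (σ x) * f x) ∧
    Lop σ U (U.indicator fun x => g (σ x) * f x) = fun x => g x * Lop σ U f x :=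
  stmt_5_general U hU σ hσ g hg f hf
end

section
/- An open set V ⊆ X is σ-invariant if and only if L(f) ∈ C_0(V) for every f ∈ C_c(U) ∩ C_0(V). -/
/-!
If `σ (V ∩ U) ⊆ V` and `f` vanishes off `V`, then every preimage in `U` of a point outside `V`
lies outside `V`, so `L f` vanishes off `V`. Continuity of `L f` is local: a partition of unity
subordinate to finitely many injectivity windows of `σ` splits `f` into pieces supported in a
single window `W`, and on `σ(W)` the operator `L` is composition with the inverse of `σ|_W`.
Conversely, for `x ∈ V ∩ U`, a bump function at `x` supported in a window inside `V` satisfies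
`L f (σ x) = f x = 1`, which forces `σ x ∈ V`.
-/

open Set Function Topology

/-- `f` is continuous on `X` and vanishes at every point of `X \ V`. -/
def MemC0 {X : Type*} [TopologicalSpace X] (V : Set X) (f : X → ℂ) : Prop :=
  Continuous f ∧ ∀ x ∉ V, f x = 0

section Lop

variable {X : Type*} [TopologicalSpace X] {σ : X → X} {U : Set X}

lemma IsCompact.finite_preimage_singleton_inter {K : Set X} (hK : IsCompact K)
    (hinj : ∀ y ∈ K, ∃ W ∈ 𝓝 y, InjOn σ W) (x : X) : (σ ⁻¹' {x} ∩ K).Finite := by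
  choose! W hW hWinj using hinj
  obtain ⟨t, htK, hcover⟩ := hK.elim_nhds_subcover W hW
  refine (t.finite_toSet.biUnion (t := fun z => W z ∩ σ ⁻¹' {x}) fun z hz => ?_).subset
    fun y hy => ?_
  · exact Subsingleton.finite fun a ha b hb => hWinj z (htK z hz) ha.1 hb.1 (ha.2.trans hb.2.symm)
  · obtain ⟨z, hz, hyz⟩ := mem_iUnion₂.1 (hcover hy.2)
    exact mem_biUnion hz ⟨hyz, hy.1⟩

lemma IsLocalHomeo.finite_fiber_inter (hσ : IsLocalHomeo σ U) {K : Set X} (hK : IsCompact K)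
    (hKU : K ⊆ U) (x : X) : ({y | y ∈ U ∧ σ y = x} ∩ K).Finite := by
  refine (hK.finite_preimage_singleton_inter (fun y hy => ?_) x).subset
    fun y ⟨⟨_, hyx⟩, hyK⟩ => ⟨hyx, hyK⟩
  obtain ⟨W, hyW, -, hWo, -, hWinj, -⟩ := hσ y (hKU hy)
  exact ⟨W, hWo.mem_nhds hyW, hWinj⟩

lemma Lop_apply_eq_zero {g : X → ℂ} {x : X} (h : ∀ y ∈ U, σ y = x → g y = 0) :
    Lop σ U g x = 0 :=
  finsum_mem_of_eqOn_zero fun y hy => h y hy.1 hy.2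

lemma Lop_apply_of_support_subset {W : Set X} (hWU : W ⊆ U) (hinj : InjOn σ W) {g : X → ℂ}
    (hg : support g ⊆ W) {w : X} (hw : w ∈ W) : Lop σ U g (σ w) = g w := by
  refine (finsum_mem_eq_sum_of_inter_support_eq g (t := {w}) ?_).trans (Finset.sum_singleton _ _)
  ext y
  simp only [mem_inter_iff, mem_ofPred_eq, mem_support, Finset.coe_singleton, mem_singleton_iff]
  constructor
  · rintro ⟨⟨-, hy⟩, hgy⟩
    exact ⟨hinj (hg hgy) hw hy, hgy⟩
  · rintro ⟨rfl, hgy⟩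
    exact ⟨⟨hWU hw, rfl⟩, hgy⟩

lemma Lop_finset_sum {ι : Type*} (t : Finset ι) {g : ι → X → ℂ} {K : Set X}
    (hgK : ∀ i ∈ t, support (g i) ⊆ K) {x : X} (hK : ({y | y ∈ U ∧ σ y = x} ∩ K).Finite) :
    Lop σ U (∑ i ∈ t, g i) x = ∑ i ∈ t, Lop σ U (g i) x := by
  have hLop : ∀ h : X → ℂ, support h ⊆ K → Lop σ U h x = ∑ y ∈ hK.toFinset, h y :=
    fun h hh => finsum_mem_eq_sum_of_inter_support_eq h <| by
      rw [hK.coe_toFinset, inter_assoc, inter_eq_right.2 hh]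
  have hsum : support (∑ i ∈ t, g i) ⊆ K := by
    simpa only [← Finset.sum_fn] using
      (Finset.support_sum t g).trans (iUnion₂_subset hgK)
  rw [hLop _ hsum, Finset.sum_congr rfl fun i hi => hLop _ (hgK i hi)]
  simp only [Finset.sum_apply]
  exact Finset.sum_comm

lemma Lop_apply_eq_zero_of_image_subset {V : Set X} (hV : σ '' (V ∩ U) ⊆ V) {g : X → ℂ}
    (hg : ∀ y ∉ V, g y = 0) {x : X} (hx : x ∉ V) : Lop σ U g x = 0 :=
  Lop_apply_eq_zero fun y hyU hyx =>
    hg y fun hyV => hx (hyx ▸ hV ⟨y, ⟨hyV, hyU⟩, rfl⟩)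

end Lop

section Continuity

variable {X : Type*} [TopologicalSpace X] [T2Space X] {σ : X → X} {U : Set X}

lemma continuous_Lop_of_tsupport_subset {W : Set X} (hWU : W ⊆ U) (hW : IsOpen W)
    (hinj : InjOn σ W) (hcont : ContinuousOn σ W)
    (himage : ∀ O ⊆ W, IsOpen O → IsOpen (σ '' O)) {g : X → ℂ} (hg : Continuous g)
    (hgK : IsCompact (tsupport g)) (hgW : tsupport g ⊆ W) : Continuous (Lop σ U g) := by
  have hL : ∀ w ∈ W, Lop σ U g (σ w) = g w := fun w hw =>
    Lop_apply_of_support_subset hWU hinj ((subset_tsupport g).trans hgW) hw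
  have hon : ContinuousOn (Lop σ U g) (σ '' W) := by
    refine continuousOn_iff'.2 fun s hs =>
      ⟨σ '' (W ∩ g ⁻¹' s), himage _ inter_subset_left (hW.inter (hs.preimage hg)), ?_⟩
    ext x
    constructor
    · rintro ⟨hxs, w, hw, rfl⟩
      exact ⟨⟨w, ⟨hw, by rwa [mem_preimage, ← hL w hw]⟩, rfl⟩, w, hw, rfl⟩
    · rintro ⟨⟨w, ⟨hw, hws⟩, rfl⟩, -⟩
      exact ⟨by rwa [mem_preimage, hL w hw], w, hw, rfl⟩
  refine continuous_iff_continuousAt.2 fun x => ?_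
  by_cases hx : x ∈ σ '' tsupport g
  · exact hon.continuousAt ((himage W subset_rfl hW).mem_nhds (image_mono hgW hx))
  · have hclosed : IsClosed (σ '' tsupport g) :=
      (hgK.image_of_continuousOn (hcont.mono hgW)).isClosed
    refine (continuousAt_const (y := (0 : ℂ))).congr (Filter.eventuallyEq_of_mem
      (hclosed.isOpen_compl.mem_nhds hx) fun x' hx' => ?_)
    exact (Lop_apply_eq_zero fun y _ hyx => image_eq_zero_of_notMem_tsupport
      fun hy => hx' ⟨y, hy, hyx⟩).symm

variable [LocallyCompactSpace X]

lemma exists_sum_eq_of_tsupport_subset_iUnion {E : Type*} [AddCommMonoid E] [Module ℝ E]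
    [TopologicalSpace E] [ContinuousSMul ℝ E] {n : ℕ} {s : Fin n → Set X}
    (hs : ∀ i, IsOpen (s i)) {f : X → E} (hf : Continuous f) (hfK : IsCompact (tsupport f))
    (hfs : tsupport f ⊆ ⋃ i, s i) :
    ∃ g : Fin n → X → E,
      (∀ i, Continuous (g i) ∧ tsupport (g i) ⊆ tsupport f ∧ tsupport (g i) ⊆ s i) ∧
      f = ∑ i, g i := by
  obtain ⟨φ, hφs, hφ1, -, -⟩ := exists_continuous_sum_one_of_isOpen_isCompact hs hfK hfs
  refine ⟨fun i x => φ i x • f x, fun i => ⟨(φ i).continuous.smul hf, ?_⟩, ?_⟩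
  · exact ⟨tsupport_smul_subset_right _ _, (tsupport_smul_subset_left _ _).trans (hφs i)⟩
  · ext x
    rw [Finset.sum_apply, ← Finset.sum_smul]
    by_cases hx : x ∈ tsupport f
    · have h1 : ∑ i, φ i x = 1 := by simpa only [Finset.sum_apply, Pi.one_apply] using hφ1 hx
      rw [h1, one_smul]
    · simp [image_eq_zero_of_notMem_tsupport hx]

theorem continuous_Lop (hσ : IsLocalHomeo σ U) {f : X → ℂ} (hf : MemCc U f) :
    Continuous (Lop σ U f) := by
  obtain ⟨hfc, hfK, hfU⟩ := hf
  have hfin := hσ.finite_fiber_inter hfK hfU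
  choose! W hyW hWU hWo _ hinj hcont himage using hσ
  obtain ⟨t, ht, hcover⟩ := hfK.elim_nhds_subcover W fun y hy =>
    (hWo y (hfU hy)).mem_nhds (hyW y (hfU hy))
  set c : Fin t.card → X := fun i => t.equivFin.symm i
  have hc : ∀ i, c i ∈ U := fun i => hfU (ht _ (t.equivFin.symm i).2)
  have hcover' : tsupport f ⊆ ⋃ i, W (c i) := fun y hy => by
    obtain ⟨z, hz, hyz⟩ := mem_iUnion₂.1 (hcover hy)
    exact mem_iUnion.2 ⟨t.equivFin ⟨z, hz⟩, by simpa [c] using hyz⟩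
  obtain ⟨g, hg, hfg⟩ :=
    exists_sum_eq_of_tsupport_subset_iUnion (fun i => hWo _ (hc i)) hfc hfK hcover'
  have hLf : Lop σ U f = fun x => ∑ i, Lop σ U (g i) x := funext fun x => by
    rw [hfg]
    exact Lop_finset_sum _ (fun i _ => (subset_tsupport _).trans (hg i).2.1) (hfin x)
  rw [hLf]
  exact continuous_finsetSum _ fun i _ =>
    continuous_Lop_of_tsupport_subset (hWU _ (hc i)) (hWo _ (hc i)) (hinj _ (hc i))
      (hcont _ (hc i)) (himage _ (hc i)) (hg i).1
      (hfK.of_isClosed_subset (isClosed_tsupport _) (hg i).2.1) (hg i).2.2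

lemma exists_continuous_tsupport_subset_apply_eq_one {O : Set X} (hO : IsOpen O) {x : X}
    (hx : x ∈ O) :
    ∃ f : X → ℂ, Continuous f ∧ IsCompact (tsupport f) ∧ tsupport f ⊆ O ∧ f x = 1 := by
  obtain ⟨φ, hφx, hφK, hφO, -⟩ :=
    exists_continuousMap_one_of_isCompact_subset_isOpen isCompact_singleton hO
      (singleton_subset_iff.2 hx)
  have hsupp : tsupport ((↑) ∘ φ : X → ℂ) ⊆ tsupport φ := tsupport_comp_subset rfl φ
  exact ⟨(↑) ∘ φ, Complex.continuous_ofReal.comp φ.continuous,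
    hφK.of_isClosed_subset (isClosed_tsupport _) hsupp, hsupp.trans hφO,
    by simp [hφx rfl]⟩

end Continuity

theorem stmt_6_general {X : Type*} [TopologicalSpace X] [CompactSpace X] [T2Space X]
    (U : Set X) (σ : X → X) (hσ : IsLocalHomeo σ U)
    (V : Set X) (hV : IsOpen V) :
    σ '' (V ∩ U) ⊆ V ↔
      ∀ f : X → ℂ, MemCc U f → MemC0 V f → MemC0 V (Lop σ U f) := by
  refine ⟨fun hinv f hf hfV =>
    ⟨continuous_Lop hσ hf, fun x hx => Lop_apply_eq_zero_of_image_subset hinv hfV.2 hx⟩, ?_⟩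
  rintro h _ ⟨x, ⟨hxV, hxU⟩, rfl⟩
  obtain ⟨W, hxW, hWU, hWo, -, hinj, -⟩ := hσ x hxU
  obtain ⟨f, hfc, hfK, hfWV, hfx⟩ :=
    exists_continuous_tsupport_subset_apply_eq_one (hWo.inter hV) ⟨hxW, hxV⟩
  have hfV : MemC0 V f :=
    ⟨hfc, fun y hy => image_eq_zero_of_notMem_tsupport fun hyf => hy (hfWV hyf).2⟩
  by_contra hσx
  have hLx := (h f ⟨hfc, hfK, hfWV.trans (inter_subset_left.trans hWU)⟩ hfV).2 _ hσx
  rw [Lop_apply_of_support_subset hWU hinj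
    ((subset_tsupport f).trans (hfWV.trans inter_subset_left)) hxW, hfx] at hLx
  exact one_ne_zero hLx

/-- An open set `V ⊆ X` is σ-invariant (i.e. `σ (V ∩ U) ⊆ V`) iff
`L f ∈ C_0(V)` for every `f ∈ C_c(U) ∩ C_0(V)`. -/
theorem stmt_6 {X : Type*} [TopologicalSpace X] [CompactSpace X] [T2Space X]
    (U : Set X) (hU : IsOpen U) (σ : X → X) (hσ : IsLocalHomeo σ U)
    (V : Set X) (hV : IsOpen V) :
    σ '' (V ∩ U) ⊆ V ↔
      ∀ f : X → ℂ, MemCc U f → MemC0 V f → MemC0 V (Lop σ U f) :=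
  stmt_6_general U σ hσ V hV
end

section
/- An open set V ⊆ X is σ⁻¹-invariant if and only if for every f ∈ C_c(U) and every g ∈ C_0(V) the function f·α(g), defined by x ↦ f(x)·g(σ(x)) for x ∈ U and 0 for x ∉ U, belongs to C_0(V). -/
/-- An open set `V ⊆ X` is σ⁻¹-invariant (i.e. `σ⁻¹(V) ⊆ V`, where
`σ⁻¹(V) = {x ∈ U : σ x ∈ V}`) iff for every `f ∈ C_c(U)` and `g ∈ C_0(V)` the
function `x ↦ f x * g (σ x)` on `U` (and `0` off `U`) belongs to `C_0(V)`. -/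
theorem stmt_7 {X : Type*} [TopologicalSpace X] [CompactSpace X] [T2Space X]
    (U : Set X) (hU : IsOpen U) (σ : X → X) (hσ : IsLocalHomeo σ U)
    (V : Set X) (hV : IsOpen V) :
    U ∩ σ ⁻¹' V ⊆ V ↔
      ∀ f : X → ℂ, MemCc U f → ∀ g : X → ℂ, MemC0 V g →
        MemC0 V (U.indicator fun x => f x * g (σ x)) := by
  constructor
  · intro hinv f hf g hg
    constructor
    · rw [continuous_iff_continuousAt]
      intro x
      by_cases hx : x ∈ U
      · obtain ⟨W, hxW, hWU, hWopen, _, _, hσW, _⟩ := hσ x hx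
        have hcont : ContinuousOn (U.indicator fun y => f y * g (σ y)) W := by
          refine ContinuousOn.congr (f := fun y => f y * g (σ y)) ?_ ?_
          · exact hf.1.continuousOn.mul (hg.1.comp_continuousOn hσW)
          · intro y hy; exact Set.indicator_of_mem (hWU hy) _
        exact hcont.continuousAt (hWopen.mem_nhds hxW)
      · have hx' : x ∉ tsupport f := fun h => hx (hf.2.2 h)
        have hev : ∀ᶠ y in nhds x, (U.indicator fun z => f z * g (σ z)) y = (0 : ℂ) := by
          filter_upwards [(isClosed_tsupport f).isOpen_compl.mem_nhds hx'] with y hy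
          have : f y = 0 := image_eq_zero_of_notMem_tsupport hy
          by_cases hyU : y ∈ U
          · rw [Set.indicator_of_mem hyU, this, zero_mul]
          · exact Set.indicator_of_notMem hyU _
        exact (continuousAt_const (y := (0:ℂ))).congr (hev.mono fun y h => h.symm)
    · intro x hxV
      by_cases hx : x ∈ U
      · rw [Set.indicator_of_mem hx]
        have hσx : σ x ∉ V := fun h => hxV (hinv ⟨hx, h⟩)
        rw [hg.2 _ hσx, mul_zero]
      · exact Set.indicator_of_notMem hx _
  · intro h x hx
    by_contra hxV
    obtain ⟨hxU, hσxV⟩ := hx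
    -- build f ∈ C_c(U) with f x = 1
    obtain ⟨L, hLU, hLc, hxL⟩ : ∃ L, L ⊆ U ∧ IsCompact L ∧ x ∈ interior L := by
      obtain ⟨L, hLc, hL1, hL2⟩ := exists_compact_between (isCompact_singleton (x := x)) hU
        (Set.singleton_subset_iff.mpr hxU)
      exact ⟨L, hL2, hLc, hL1 rfl⟩
    obtain ⟨f₀, hf1, hf0, hfc, -⟩ := exists_continuous_one_zero_of_isCompact
      (isCompact_singleton (x := x)) isOpen_interior.isClosed_compl
      (Set.disjoint_singleton_left.mpr (by simpa using hxL))
    obtain ⟨g₀, hg1, hg0, -, -⟩ := exists_continuous_one_zero_of_isCompact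
      (isCompact_singleton (x := σ x)) hV.isClosed_compl
      (Set.disjoint_singleton_left.mpr (by simpa using hσxV))
    set f : X → ℂ := fun y => (f₀ y : ℂ) with hfdef
    set g : X → ℂ := fun y => (g₀ y : ℂ) with hgdef
    have hsupp : tsupport f ⊆ U := by
      have h1 : Function.support f ⊆ interior L := by
        intro y hy
        by_contra hyL
        exact hy (by simp [hfdef, hf0 hyL])
      calc tsupport f ⊆ closure (interior L) := closure_mono h1
        _ ⊆ L := closure_minimal interior_subset hLc.isClosed
        _ ⊆ U := hLU
    have hfCc : MemCc U f := by
      refine ⟨Complex.continuous_ofReal.comp f₀.continuous, ?_, hsupp⟩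
      exact IsCompact.of_isClosed_subset (hLc) (isClosed_tsupport f)
        ((closure_mono (fun y hy => by
          by_contra hyL
          exact hy (by simp [hfdef, hf0 hyL]))).trans
          (closure_minimal interior_subset hLc.isClosed))
    have hgC0 : MemC0 V g := by
      refine ⟨Complex.continuous_ofReal.comp g₀.continuous, fun y hy => ?_⟩
      simp [hgdef, hg0 hy]
    have := (h f hfCc g hgC0).2 x hxV
    rw [Set.indicator_of_mem hxU] at this
    have hfx : f x = 1 := by simp [hfdef, hf1 rfl]
    have hgx : g (σ x) = 1 := by simp [hgdef, hg1 rfl]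
    rw [hfx, hgx, one_mul] at this
    exact one_ne_zero this
end

section
/- Let i ≠ j in ℕ with max(i,j) ≥ 1, and let x ∈ dom(σ^i) ∩ dom(σ^j) with σ^i(x) ≠ σ^j(x). Then there exists a continuous function h : X → ℝ with 0 ≤ h ≤ 1, h(x) = 1, supp(h) a compact subset of U contained in dom(σ^{max(i,j)}), and σ^i(supp(h)) ∩ σ^j(supp(h)) = ∅. -/
/-- `dom(σ^k)`: the set of points `x` such that the iterates `σ^j x` are defined for
all `j < k` (i.e. `x ∈ U`, `σ x ∈ U`, …, so that `σ^k x` is defined);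
`dom(σ^0) = X`. -/
def domIter {X : Type*} (σ : X → X) (U : Set X) (k : ℕ) : Set X :=
  {x : X | ∀ j < k, σ^[j] x ∈ U}

/-- `V^{i,j} = {x ∈ dom(σ^i) ∩ dom(σ^j) : σ^i x = σ^j x}`. -/
def VIJ {X : Type*} (σ : X → X) (U : Set X) (i j : ℕ) : Set X :=
  {x : X | x ∈ domIter σ U i ∧ x ∈ domIter σ U j ∧ σ^[i] x = σ^[j] x}

section Aux

variable {X : Type*} [TopologicalSpace X] {σ : X → X} {U : Set X}

lemma aux_contOn (hσ : IsLocalHomeo σ U) : ContinuousOn σ U := by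
  intro x hx
  obtain ⟨W, hxW, hWU, hWo, _, _, hc, _⟩ := hσ x hx
  exact (hc.continuousAt (hWo.mem_nhds hxW)).continuousWithinAt

lemma domIter_succ (σ : X → X) (U : Set X) (k : ℕ) :
    domIter σ U (k + 1) = U ∩ σ ⁻¹' (domIter σ U k) := by
  ext y
  simp only [domIter, Set.mem_setOf_eq, Set.mem_inter_iff, Set.mem_preimage]
  constructor
  · intro h
    refine ⟨by simpa using h 0 (Nat.succ_pos _), fun m hm => ?_⟩
    simpa [Function.iterate_succ_apply] using h (m + 1) (Nat.succ_lt_succ hm)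
  · rintro ⟨h0, h⟩ m hm
    cases m with
    | zero => simpa using h0
    | succ m => simpa [Function.iterate_succ_apply] using h m (Nat.lt_of_succ_lt_succ hm)

lemma aux_isOpen_domIter (hU : IsOpen U) (hσ : IsLocalHomeo σ U) (k : ℕ) :
    IsOpen (domIter σ U k) := by
  induction k with
  | zero => simpa [domIter] using isOpen_univ
  | succ k ih =>
    rw [domIter_succ]
    exact (aux_contOn hσ).isOpen_inter_preimage hU ih

lemma aux_domIter_subset_U {k : ℕ} (hk : 1 ≤ k) : domIter σ U k ⊆ U := by
  intro y hy
  simpa using hy 0 hk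

lemma aux_contOn_iter (hσ : IsLocalHomeo σ U) (k : ℕ) :
    ContinuousOn (σ^[k]) (domIter σ U k) := by
  induction k with
  | zero => simpa using continuousOn_id
  | succ k ih =>
    rw [Function.iterate_succ, domIter_succ]
    refine ContinuousOn.comp ih ((aux_contOn hσ).mono Set.inter_subset_left) ?_
    exact fun y hy => hy.2

lemma domIter_mono (σ : X → X) (U : Set X) {k l : ℕ} (h : k ≤ l) :
    domIter σ U l ⊆ domIter σ U k := fun y hy m hm => hy m (lt_of_lt_of_le hm h)

end Aux

/-- For `i ≠ j` with `max i j ≥ 1` and `x ∈ dom(σ^i) ∩ dom(σ^j)` with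
`σ^i x ≠ σ^j x`, there is a continuous `h : X → ℝ`, `0 ≤ h ≤ 1`, `h x = 1`, with
compact support contained in `U` and in `dom(σ^{max i j})`, such that
`σ^i (supp h) ∩ σ^j (supp h) = ∅`. -/
theorem stmt_13 {X : Type*} [TopologicalSpace X] [CompactSpace X] [T2Space X]
    (U : Set X) (hU : IsOpen U) (σ : X → X) (hσ : IsLocalHomeo σ U)
    (i j : ℕ) (hij : i ≠ j) (hmax : 1 ≤ max i j)
    (x : X) (hxi : x ∈ domIter σ U i) (hxj : x ∈ domIter σ U j)
    (hne : σ^[i] x ≠ σ^[j] x) :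
    ∃ h : X → ℝ, Continuous h ∧ (∀ y, 0 ≤ h y ∧ h y ≤ 1) ∧ h x = 1 ∧
      IsCompact (tsupport h) ∧ tsupport h ⊆ U ∧
      tsupport h ⊆ domIter σ U (max i j) ∧
      σ^[i] '' tsupport h ∩ σ^[j] '' tsupport h = ∅ := by
  -- separate the two images
  obtain ⟨A, B, hAo, hBo, hiA, hjB, hAB⟩ := t2_separation hne
  -- the open neighborhood V of x
  set V : Set X := (domIter σ U i ∩ σ^[i] ⁻¹' A) ∩ (domIter σ U j ∩ σ^[j] ⁻¹' B) ∩
      domIter σ U (max i j) with hV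
  have hVopen : IsOpen V := by
    refine (IsOpen.inter (IsOpen.inter ?_ ?_) (aux_isOpen_domIter hU hσ _))
    · exact (aux_contOn_iter hσ i).isOpen_inter_preimage (aux_isOpen_domIter hU hσ i) hAo
    · exact (aux_contOn_iter hσ j).isOpen_inter_preimage (aux_isOpen_domIter hU hσ j) hBo
  have hxV : x ∈ V := by
    refine ⟨⟨⟨hxi, hiA⟩, ⟨hxj, hjB⟩⟩, ?_⟩
    intro m hm
    rcases lt_or_ge m i with h | h
    · exact hxi m h
    · exact hxj m (by omega)
  -- compact set between {x} and V
  obtain ⟨K, hKc, hxK, hKV⟩ := exists_compact_between (isCompact_singleton (x := x)) hVopen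
    (Set.singleton_subset_iff.mpr hxV)
  have hKclosed : IsClosed K := hKc.isClosed
  -- Urysohn for {x} and (interior K)ᶜ
  obtain ⟨f, hf1, hf0, _, hf01⟩ := exists_continuous_one_zero_of_isCompact
    (isCompact_singleton (x := x)) (isOpen_interior (s := K)).isClosed_compl
    (Set.disjoint_compl_right_iff_subset.mpr hxK)
  have hsupp : tsupport f ⊆ V := by
    have h1 : Function.support f ⊆ interior K := by
      intro y hy
      by_contra hyK
      exact hy (hf0 hyK)
    calc tsupport f ⊆ closure (interior K) := closure_mono h1
      _ ⊆ K := hKclosed.closure_interior_subset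
      _ ⊆ V := hKV
  have hsuppDom : tsupport f ⊆ domIter σ U (max i j) :=
    hsupp.trans (fun y hy => hy.2)
  refine ⟨f, f.continuous, fun y => ⟨(hf01 y).1, (hf01 y).2⟩, hf1 rfl, ?_, ?_, hsuppDom, ?_⟩
  · exact (isClosed_tsupport _).isCompact
  · exact hsuppDom.trans (aux_domIter_subset_U hmax)
  · rw [Set.eq_empty_iff_forall_notMem]
    rintro z ⟨⟨a, ha, rfl⟩, ⟨b, hb, hba⟩⟩
    have hA : σ^[i] a ∈ A := (hsupp ha).1.1.2
    have hB : σ^[i] a ∈ B := hba ▸ (hsupp hb).1.2.2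
    exact hAB.le_bot ⟨hA, hB⟩
end
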